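/- arXiv:1811.10427 — 3 statements merged into one kernel-verified Lean document; each statement's English description precedes it below -/
import Mathlib

section
/- Let H be a real inner product space that is a Hilbert space, let m be a natural number, let k : Fin m → H be a finite family of vectors, and let g : (Fin m → ℝ) → ℝ be arbitrary. Define the objective J : H → ℝ by J(f) = g(fun i => ⟪k i, f⟫). Let S be the (finite-dimensional, hence complete) linear span of {k i : i ∈ Fin m} and let P denote the orthogonal projection of H onto S. Then J(P f) = J(f) for every f ∈ H, and consequently the infimum of J over all of H equals the infimum of J over S; in particular, any minimizer f of J over H can be replaced by the minimizer P f, which admits a representation P f = ∑_{i} α_i • k i for some coefficients α : Fin m → ℝ. -/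
open RealInnerProductSpace Submodule

/-- Representer theorem (Theorem 1 of the paper), abstract form: an objective that
depends on `f` only through the inner products `⟪k i, f⟫` is unchanged by orthogonal
projection onto the span of the `k i`, hence its infimum over the whole space equals
its infimum over the span, and the projection of any point is a linear combination
`∑ i, α i • k i`. -/
theorem stmt_0 {H : Type*} [NormedAddCommGroup H] [InnerProductSpace ℝ H] [CompleteSpace H]
    (m : ℕ) (k : Fin m → H) (g : (Fin m → ℝ) → ℝ) (J : H → ℝ)
    (hJ : ∀ f : H, J f = g fun i => ⟪k i, f⟫) :
    letI S : Submodule ℝ H := Submodule.span ℝ (Set.range k)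
    letI : FiniteDimensional ℝ S := FiniteDimensional.span_of_finite ℝ (Set.finite_range k)
    (∀ f : H, J ((orthogonalProjection S f : H)) = J f) ∧
    (⨅ f : H, J f) = (⨅ s : S, J (s : H)) ∧
    (∀ f : H, ∃ α : Fin m → ℝ,
      (orthogonalProjection S f : H) = ∑ i : Fin m, α i • k i) := by
  haveI : FiniteDimensional ℝ (Submodule.span ℝ (Set.range k)) := FiniteDimensional.span_of_finite ℝ (Set.finite_range k)
  have hproj : ∀ f : H, J ((orthogonalProjection (Submodule.span ℝ (Set.range k)) f : H)) = J f := by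
    intro f
    rw [hJ, hJ]
    congr 1
    funext i
    have hk : k i ∈ (Submodule.span ℝ (Set.range k)) := Submodule.subset_span ⟨i, rfl⟩
    have horth : ⟪k i, f - (orthogonalProjection (Submodule.span ℝ (Set.range k)) f : H)⟫ = 0 := by
      exact Submodule.sub_starProjection_mem_orthogonal (K := Submodule.span ℝ (Set.range k)) f _ hk
    have := inner_sub_right (𝕜 := ℝ) (k i) f (orthogonalProjection (Submodule.span ℝ (Set.range k)) f : H)
    rw [horth] at this
    linarith
  refine ⟨hproj, ?_, ?_⟩
  · have hrange : Set.range J = Set.range (fun s : (Submodule.span ℝ (Set.range k)) => J (s : H)) := by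
      ext y
      constructor
      · rintro ⟨f, rfl⟩
        exact ⟨orthogonalProjection (Submodule.span ℝ (Set.range k)) f, hproj f⟩
      · rintro ⟨s, rfl⟩
        exact ⟨(s : H), rfl⟩
    rw [iInf, iInf, hrange]
  · intro f
    have hmem : (orthogonalProjection (Submodule.span ℝ (Set.range k)) f : H) ∈ (Submodule.span ℝ (Set.range k)) := (orthogonalProjection (Submodule.span ℝ (Set.range k)) f).2
    rw [mem_span_range_iff_exists_fun] at hmem
    obtain ⟨α, hα⟩ := hmem
    exact ⟨α, hα.symm⟩
end

section
/- Let (U, ν) be a probability space, V a finite nonempty set, Δ > 0, ε > 0, and let F : U × V → ℝ be such that for each v ∈ V the map u ↦ F(u, v) is measurable and |F(u, v)| ≤ Δ for all u, v. Let T ≥ 1 be a natural number with |V| · exp(− T ε² / (8 Δ²)) < 1. Then there exist u_1, …, u_T ∈ U such that for every v ∈ V, (1/T) ∑_{i=1}^T F(u_i, v) ≤ ∫ F(u, v) dν(u) + ε/2. -/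
open MeasureTheory

open Real


/-- If `f 0 = 0` and `f` has nonneg derivative on `[0, ∞)`, then `f ≥ 0` there. -/
lemma aux_nonneg_of_deriv (f f' : ℝ → ℝ) (hf : ∀ x, HasDerivAt f (f' x) x)
    (h0 : f 0 = 0) (h' : ∀ x, 0 ≤ x → 0 ≤ f' x) : ∀ x, 0 ≤ x → 0 ≤ f x := by
  have hmono : MonotoneOn f (Set.Ici (0:ℝ)) := by
    apply monotoneOn_of_deriv_nonneg (convex_Ici 0)
    · exact (continuous_iff_continuousAt.mpr fun x => (hf x).continuousAt).continuousOn
    · exact fun x _ => (hf x).differentiableAt.differentiableWithinAt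
    · intro x hx
      rw [(hf x).deriv]
      rw [interior_Ici] at hx
      exact h' x hx.le
  intro x hx
  have := hmono (Set.self_mem_Ici) hx hx
  simpa [h0] using this

/-- Core Hoeffding inequality for the dyadic function. -/
lemma aux_core (p : ℝ) (hp0 : 0 ≤ p) (hp1 : p ≤ 1) :
    ∀ h : ℝ, 0 ≤ h → (1 - p + p * exp h) * exp (-(p * h)) ≤ exp (h ^ 2 / 8) := by
  set D : ℝ → ℝ := fun x => 1 - p + p * exp x with hDdef
  have hD : ∀ x, 0 < D x := by
    intro x
    rcases eq_or_lt_of_le hp0 with h0 | h0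
    · simp [hDdef, ← h0]
    · have h2 : 0 < p * exp x := mul_pos h0 (exp_pos x)
      simp only [hDdef]; linarith
  have hDd : ∀ x, HasDerivAt D (p * exp x) x := by
    intro x
    exact ((Real.hasDerivAt_exp x).const_mul p).const_add (1 - p)
  set g1 : ℝ → ℝ := fun x => p * exp x / D x - p with hg1def
  set g2 : ℝ → ℝ := fun x => (1 - p) * (p * exp x) / (D x) ^ 2 with hg2def
  have hg1d : ∀ x, HasDerivAt g1 (g2 x) x := by
    intro x
    have := (((Real.hasDerivAt_exp x).const_mul p).div (hDd x) (hD x).ne').sub_const p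
    refine this.congr_deriv ?_
    have : D x - p * exp x = 1 - p := by simp only [hDdef]; ring
    simp only [hg2def]
    field_simp [(hD x).ne']
    try ring
  have hg2le : ∀ x, g2 x ≤ 1 / 4 := by
    intro x
    have h1 : (0:ℝ) < (D x) ^ 2 := pow_pos (hD x) 2
    rw [hg2def, div_le_iff₀ h1]
    have hDx : D x = (1 - p) + p * exp x := rfl
    nlinarith [sq_nonneg ((1 - p) - p * exp x)]
  have hg2ge : ∀ x, 0 ≤ g2 x := by
    intro x
    apply div_nonneg _ (sq_nonneg _)
    have : 0 ≤ p * exp x := mul_nonneg hp0 (exp_pos x).le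
    nlinarith
  -- claim 1 : g1 x ≤ x / 4 for x ≥ 0
  have claim1 : ∀ x, 0 ≤ x → g1 x ≤ x / 4 := by
    intro x hx
    have := aux_nonneg_of_deriv (fun x => x / 4 - g1 x) (fun x => 1 / 4 - g2 x)
      (fun x => ((hasDerivAt_id x).div_const 4).sub (hg1d x))
      (by simp [hg1def, hDdef]) (fun x _ => by linarith [hg2le x]) x hx
    linarith
  -- g and claim 2
  set g : ℝ → ℝ := fun x => Real.log (D x) - p * x with hgdef
  have hgd : ∀ x, HasDerivAt g (g1 x) x := by
    intro x
    have hlog : HasDerivAt (fun x => Real.log (D x)) (p * exp x / D x) x := by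
      have := (hDd x).log (hD x).ne'
      simpa [div_eq_mul_inv, mul_comm] using this
    exact (hlog.sub ((hasDerivAt_id x).const_mul p)).congr_deriv (by simp [hg1def])
  have claim2 : ∀ x, 0 ≤ x → g x ≤ x ^ 2 / 8 := by
    intro x hx
    have := aux_nonneg_of_deriv (fun x => x ^ 2 / 8 - g x) (fun x => x / 4 - g1 x)
      (fun x => by
        have hsq : HasDerivAt (fun x : ℝ => x ^ 2 / 8) (x / 4) x := by
          have := ((hasDerivAt_pow 2 x).div_const 8)
          refine this.congr_deriv ?_; push_cast; ring
        exact hsq.sub (hgd x))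
      (by simp [hgdef, hDdef]) (fun x hx => by linarith [claim1 x hx]) x hx
    linarith
  intro h hh
  have hle := claim2 h hh
  have := Real.exp_le_exp.mpr hle
  calc (1 - p + p * exp h) * exp (-(p * h)) = exp (g h) := by
        rw [hgdef]
        simp only [Real.exp_sub, Real.exp_log (hD h)]
        rw [Real.exp_neg]
        simp [hDdef, div_eq_mul_inv]
    _ ≤ exp (h ^ 2 / 8) := this

/-- Hoeffding's lemma: mgf bound for a mean-zero bounded random variable. -/
lemma aux_hoeffding {U : Type*} [MeasurableSpace U] (ν : Measure U) [IsProbabilityMeasure ν]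
    (f : U → ℝ) (hm : Measurable f) (a b : ℝ) (ha : a ≤ 0) (hb : 0 ≤ b)
    (hfab : ∀ u, f u ∈ Set.Icc a b) (hmean : ∫ u, f u ∂ν = 0) (t : ℝ) (ht : 0 ≤ t) :
    ∫ u, exp (t * f u) ∂ν ≤ exp (t ^ 2 * (b - a) ^ 2 / 8) := by
  rcases eq_or_lt_of_le (ha.trans hb) with hab | hab
  · -- a = b = 0, f ≡ 0
    have ha0 : a = 0 := by linarith
    have hb0 : b = 0 := by linarith
    have hf0 : ∀ u, f u = 0 := by
      intro u; have h := hfab u; rw [ha0, hb0] at h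
      exact le_antisymm h.2 h.1
    simp [hf0, ha0, hb0, measure_univ]
  · have hba : (0:ℝ) < b - a := by linarith
    -- integrability of f
    have hfint : Integrable f ν := by
      refine Integrable.mono' (integrable_const (max (-a) b)) hm.aestronglyMeasurable ?_
      refine ae_of_all _ fun u => ?_
      rw [Real.norm_eq_abs, abs_le]
      refine ⟨?_, (hfab u).2.trans (le_max_right _ _)⟩
      have h1 : -a ≤ max (-a) b := le_max_left _ _
      linarith [(hfab u).1]
    have hexint : Integrable (fun u => exp (t * f u)) ν := by
      refine Integrable.mono' (integrable_const (exp (t * b)))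
        ((hm.const_mul t).exp).aestronglyMeasurable (ae_of_all _ fun u => ?_)
      rw [Real.norm_eq_abs, abs_of_pos (exp_pos _), exp_le_exp]
      exact mul_le_mul_of_nonneg_left (hfab u).2 ht
    have hchordint : Integrable
        (fun u => ((b - f u) * exp (t * a) + (f u - a) * exp (t * b)) / (b - a)) ν := by
      exact ((((integrable_const b).sub hfint).mul_const _).add
        ((hfint.sub (integrable_const a)).mul_const _)).div_const _
    have hchord : ∀ u, exp (t * f u) ≤
        ((b - f u) * exp (t * a) + (f u - a) * exp (t * b)) / (b - a) := by
      intro u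
      have h1 := (hfab u).1
      have h2 := (hfab u).2
      have hθ : (0:ℝ) ≤ (b - f u) / (b - a) := div_nonneg (by linarith) hba.le
      have hθ' : (0:ℝ) ≤ (f u - a) / (b - a) := div_nonneg (by linarith) hba.le
      have hsum : (b - f u) / (b - a) + (f u - a) / (b - a) = 1 := by
        rw [← add_div, div_eq_one_iff_eq hba.ne']; ring
      have hcx := convexOn_exp.2 (Set.mem_univ (t * a)) (Set.mem_univ (t * b)) hθ hθ' hsum
      simp only [smul_eq_mul] at hcx
      have harg : (b - f u) / (b - a) * (t * a) + (f u - a) / (b - a) * (t * b) = t * f u := by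
        field_simp; ring
      rw [harg] at hcx
      calc exp (t * f u) ≤ (b - f u) / (b - a) * exp (t * a) + (f u - a) / (b - a) * exp (t * b) :=
            hcx
        _ = ((b - f u) * exp (t * a) + (f u - a) * exp (t * b)) / (b - a) := by ring
    have hint_le := integral_mono hexint hchordint hchord
    have hval : ∫ u, ((b - f u) * exp (t * a) + (f u - a) * exp (t * b)) / (b - a) ∂ν
        = (b * exp (t * a) - a * exp (t * b)) / (b - a) := by
      have hrw : (fun u => ((b - f u) * exp (t * a) + (f u - a) * exp (t * b)) / (b - a))
          = fun u => (b * exp (t * a) - a * exp (t * b)) / (b - a)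
            + f u * ((exp (t * b) - exp (t * a)) / (b - a)) := by
        funext u; field_simp; ring
      rw [hrw, integral_add (integrable_const _) (hfint.mul_const _), integral_const,
        integral_mul_const, hmean, probReal_univ]
      simp
    set p := -a / (b - a) with hp
    set h := t * (b - a) with hh
    have hp0 : 0 ≤ p := div_nonneg (by linarith) hba.le
    have hp1 : p ≤ 1 := by rw [hp, div_le_one hba]; linarith
    have hh0 : 0 ≤ h := mul_nonneg ht hba.le
    have hcore := aux_core p hp0 hp1 h hh0
    have e1 : -(p * h) = t * a := by rw [hp, hh]; field_simp
    have heq : (1 - p + p * exp h) * exp (-(p * h))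
        = (b * exp (t * a) - a * exp (t * b)) / (b - a) := by
      have e2 : h + -(p * h) = t * b := by rw [hp, hh]; field_simp; ring
      have : (1 - p + p * exp h) * exp (-(p * h))
          = (1 - p) * exp (-(p * h)) + p * exp (h + -(p * h)) := by
        rw [Real.exp_add]; ring
      rw [this, e2, e1, hp]
      field_simp
      ring
    have hexp : h ^ 2 / 8 = t ^ 2 * (b - a) ^ 2 / 8 := by rw [hh]; ring
    calc ∫ u, exp (t * f u) ∂ν ≤ (b * exp (t * a) - a * exp (t * b)) / (b - a) :=
          hval ▸ hint_le
      _ ≤ exp (h ^ 2 / 8) := heq ▸ hcore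
      _ = exp (t ^ 2 * (b - a) ^ 2 / 8) := by rw [hexp]

/-- Existence of a finite mixture of generators whose payoff against every
discriminator in a finite net is at most `ε/2` above the mixed-strategy payoff,
as constructed via the probabilistic method (Hoeffding plus union bound) in the
proof of Theorem 3 of the paper. -/
theorem stmt_8 {U : Type*} [MeasurableSpace U] (ν : Measure U) [IsProbabilityMeasure ν]
    {V : Type*} [Fintype V] [Nonempty V]
    (Δ ε : ℝ) (hΔ : 0 < Δ) (hε : 0 < ε)
    (F : U → V → ℝ)
    (hmeas : ∀ v : V, Measurable fun u => F u v)
    (hbdd : ∀ (u : U) (v : V), |F u v| ≤ Δ)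
    (T : ℕ) (hT : 1 ≤ T)
    (hTbig : (Fintype.card V : ℝ) * Real.exp (-(T : ℝ) * ε ^ 2 / (8 * Δ ^ 2)) < 1) :
    ∃ u : Fin T → U, ∀ v : V,
      (∑ i : Fin T, F (u i) v) / T ≤ (∫ x, F x v ∂ν) + ε / 2 := by
  classical
  set m : V → ℝ := fun v => ∫ x, F x v ∂ν with hm
  have hFint : ∀ v, Integrable (fun u => F u v) ν := fun v =>
    Integrable.mono' (integrable_const Δ) (hmeas v).aestronglyMeasurable
      (ae_of_all _ fun u => by rw [Real.norm_eq_abs]; exact hbdd u v)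
  have hmabs : ∀ v, |m v| ≤ Δ := by
    intro v
    have := norm_integral_le_of_norm_le_const (μ := ν) (f := fun u => F u v) (C := Δ)
      (ae_of_all _ fun u => by rw [Real.norm_eq_abs]; exact hbdd u v)
    simpa [hm, measure_univ] using this
  letI : MeasureSpace U := ⟨ν⟩
  haveI : IsProbabilityMeasure (volume : Measure U) := ‹IsProbabilityMeasure ν›
  haveI hPP : IsProbabilityMeasure (volume : Measure (Fin T → U)) := by
    rw [MeasureTheory.volume_pi]; infer_instance
  set t : ℝ := ε / (2 * Δ ^ 2) with htdef
  have ht0 : 0 < t := div_pos hε (by positivity)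
  set Y : V → U → ℝ := fun v u => F u v - m v with hYdef
  have hY : ∀ v, Measurable (Y v) := fun v => (hmeas v).sub_const _
  have hYmean : ∀ v, ∫ u, Y v u ∂ν = 0 := by
    intro v
    rw [hYdef]
    rw [integral_sub (hFint v) (integrable_const _), integral_const, probReal_univ]
    simp [hm]
  have hYab : ∀ v u, Y v u ∈ Set.Icc (-Δ - m v) (Δ - m v) := by
    intro v u
    have h := abs_le.1 (hbdd u v)
    exact ⟨by simp only [hYdef]; linarith [h.1], by simp only [hYdef]; linarith [h.2]⟩
  have hYle : ∀ v u, Y v u ≤ 2 * Δ := by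
    intro v u
    have h := abs_le.1 (hbdd u v)
    have h2 := abs_le.1 (hmabs v)
    simp only [hYdef]; linarith [h.2, h2.1]
  have hmgf : ∀ v, ∫ u, Real.exp (t * Y v u) ∂ν ≤ Real.exp (t ^ 2 * Δ ^ 2 / 2) := by
    intro v
    have h2 := abs_le.1 (hmabs v)
    have ha : -Δ - m v ≤ 0 := by linarith [h2.1]
    have hb : 0 ≤ Δ - m v := by linarith [h2.2]
    have := aux_hoeffding ν (Y v) (hY v) _ _ ha hb (hYab v) (hYmean v) t ht0.le
    have harg : t ^ 2 * ((Δ - m v) - (-Δ - m v)) ^ 2 / 8 = t ^ 2 * Δ ^ 2 / 2 := by ring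
    rwa [harg] at this
  -- events on the product space
  set A : V → Set (Fin T → U) := fun v => {ω | (T : ℝ) * ε / 2 ≤ ∑ i, Y v (ω i)} with hA
  have hXmeas : ∀ v, Measurable (fun ω : Fin T → U => ∑ i, Y v (ω i)) := fun v =>
    Finset.measurable_sum _ fun i _ => (hY v).comp (measurable_pi_apply i)
  have hexpint : ∀ v,
      Integrable (fun ω : Fin T → U => Real.exp (t * ∑ i, Y v (ω i))) volume := by
    intro v
    refine Integrable.mono' (integrable_const (Real.exp (t * ((T : ℝ) * (2 * Δ)))))
      (((hXmeas v).const_mul t).exp).aestronglyMeasurable (ae_of_all _ fun ω => ?_)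
    rw [Real.norm_eq_abs, abs_of_pos (Real.exp_pos _), Real.exp_le_exp]
    refine mul_le_mul_of_nonneg_left ?_ ht0.le
    calc ∑ i, Y v (ω i) ≤ ∑ _i : Fin T, 2 * Δ := Finset.sum_le_sum fun i _ => hYle v (ω i)
      _ = (T : ℝ) * (2 * Δ) := by simp [Finset.sum_const, Fintype.card_fin]
  have hprob : ∀ v, (volume (A v)).toReal ≤
      Real.exp (-(T : ℝ) * ε ^ 2 / (8 * Δ ^ 2)) := by
    intro v
    have hch := ProbabilityTheory.measure_ge_le_exp_mul_mgf (μ := (volume : Measure (Fin T → U)))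
      (X := fun ω => ∑ i, Y v (ω i)) ((T : ℝ) * ε / 2) ht0.le (hexpint v)
    have hmgfeq : ProbabilityTheory.mgf (fun ω : Fin T → U => ∑ i, Y v (ω i)) volume t
        = (∫ u, Real.exp (t * Y v u) ∂ν) ^ T := by
      have h1 : ProbabilityTheory.mgf (fun ω : Fin T → U => ∑ i, Y v (ω i)) volume t
          = ∫ ω : Fin T → U, ∏ i, Real.exp (t * Y v (ω i)) := by
        unfold ProbabilityTheory.mgf
        congr 1
        funext ω
        simp only [Finset.mul_sum, Real.exp_sum]
      rw [h1, MeasureTheory.volume_pi, MeasureTheory.integral_fintype_prod_eq_pow (ι := Fin T)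
        (fun u => Real.exp (t * Y v u))]
      simp only [Fintype.card_fin]
      rfl
    have hpow : (∫ u, Real.exp (t * Y v u) ∂ν) ^ T ≤ (Real.exp (t ^ 2 * Δ ^ 2 / 2)) ^ T := by
      refine pow_le_pow_left₀ ?_ (hmgf v) T
      exact integral_nonneg fun u => (Real.exp_pos _).le
    have hfin : Real.exp (-t * ((T : ℝ) * ε / 2)) * (Real.exp (t ^ 2 * Δ ^ 2 / 2)) ^ T
        = Real.exp (-(T : ℝ) * ε ^ 2 / (8 * Δ ^ 2)) := by
      rw [← Real.exp_nat_mul, ← Real.exp_add]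
      congr 1
      rw [htdef]
      field_simp
      ring
    calc (volume (A v)).toReal
        ≤ Real.exp (-t * ((T : ℝ) * ε / 2)) *
          ProbabilityTheory.mgf (fun ω : Fin T → U => ∑ i, Y v (ω i)) volume t := hch
      _ ≤ Real.exp (-t * ((T : ℝ) * ε / 2)) * (Real.exp (t ^ 2 * Δ ^ 2 / 2)) ^ T := by
          rw [hmgfeq]
          exact mul_le_mul_of_nonneg_left hpow (Real.exp_pos _).le
      _ = Real.exp (-(T : ℝ) * ε ^ 2 / (8 * Δ ^ 2)) := hfin
  -- union bound
  have hunion : volume (⋃ v, A v) < 1 := by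
    have h1 : volume (⋃ v, A v) ≤ ∑ v : V, volume (A v) := measure_iUnion_fintype_le volume A
    have h2 : ∀ v, volume (A v) ≤ ENNReal.ofReal
        (Real.exp (-(T : ℝ) * ε ^ 2 / (8 * Δ ^ 2))) := by
      intro v
      rw [ENNReal.le_ofReal_iff_toReal_le (measure_ne_top _ _) (Real.exp_pos _).le]
      exact hprob v
    calc volume (⋃ v, A v) ≤ ∑ v : V, volume (A v) := h1
      _ ≤ ∑ _v : V, ENNReal.ofReal (Real.exp (-(T : ℝ) * ε ^ 2 / (8 * Δ ^ 2))) :=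
          Finset.sum_le_sum fun v _ => h2 v
      _ = (Fintype.card V : ENNReal) *
          ENNReal.ofReal (Real.exp (-(T : ℝ) * ε ^ 2 / (8 * Δ ^ 2))) := by
          rw [Finset.sum_const, nsmul_eq_mul, Finset.card_univ]
      _ = ENNReal.ofReal ((Fintype.card V : ℝ) *
          Real.exp (-(T : ℝ) * ε ^ 2 / (8 * Δ ^ 2))) := by
          rw [ENNReal.ofReal_mul (by positivity), ENNReal.ofReal_natCast]
      _ < 1 := by rwa [← ENNReal.ofReal_one, ENNReal.ofReal_lt_ofReal_iff one_pos]
  have hne : (⋃ v, A v) ≠ Set.univ := by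
    intro hcontra
    rw [hcontra, measure_univ] at hunion
    exact lt_irrefl _ hunion
  obtain ⟨ω, hω⟩ : ∃ ω, ω ∉ ⋃ v, A v := by
    by_contra hc
    push_neg at hc
    exact hne (Set.eq_univ_of_forall hc)
  refine ⟨ω, fun v => ?_⟩
  have hωv : ¬ ((T : ℝ) * ε / 2 ≤ ∑ i, Y v (ω i)) := fun hmem =>
    hω (Set.mem_iUnion.2 ⟨v, hmem⟩)
  push_neg at hωv
  have hsum : ∑ i, Y v (ω i) = (∑ i, F (ω i) v) - (T : ℝ) * m v := by
    simp only [hYdef, Finset.sum_sub_distrib, Finset.sum_const, Finset.card_univ,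
      Fintype.card_fin, nsmul_eq_mul]
  rw [hsum] at hωv
  have hT0 : (0 : ℝ) < T := by exact_mod_cast hT
  have hgoal : (∑ i : Fin T, F (ω i) v) / T ≤ m v + ε / 2 := by
    rw [div_le_iff₀ hT0]
    nlinarith [hωv]
  exact hgoal
end

section
/- Let n, m ≥ 1 with m ≤ n, let A be an n × n real matrix that is symmetric and negative definite (xᵀ A x < 0 for every nonzero x ∈ ℝ^n), and let B be an n × m real matrix of full column rank (rank B = m). Form the (n+m) × (n+m) real block matrix J = [[A, B], [−Bᵀ, 0]]. Then every eigenvalue λ ∈ ℂ of J (i.e. every root of the characteristic polynomial of J regarded as a complex matrix) satisfies Re(λ) < 0; that is, J is a Hurwitz matrix. -/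
open Matrix Complex Finset

private lemma re_quad_aux (n : ℕ) (A : Matrix (Fin n) (Fin n) ℝ) (x : Fin n → ℂ) :
    (star x ⬝ᵥ (A.map (Complex.ofReal ·)) *ᵥ x).re
      = (fun i => (x i).re) ⬝ᵥ A *ᵥ (fun i => (x i).re)
        + (fun i => (x i).im) ⬝ᵥ A *ᵥ (fun i => (x i).im) := by
  simp only [dotProduct, mulVec, Pi.star_apply, Matrix.map_apply, Finset.mul_sum,
    Complex.re_sum]
  rw [← Finset.sum_add_distrib]
  refine Finset.sum_congr rfl fun i _ => ?_
  rw [← Finset.sum_add_distrib]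
  refine Finset.sum_congr rfl fun j _ => ?_
  simp only [Complex.star_def, Complex.mul_re, Complex.mul_im, Complex.conj_re,
    Complex.conj_im, Complex.ofReal_re, Complex.ofReal_im]
  ring

private lemma dot_swap_aux (n m : ℕ) (B : Matrix (Fin n) (Fin m) ℝ)
    (x : Fin n → ℂ) (y : Fin m → ℂ) :
    star x ⬝ᵥ (B.map (Complex.ofReal ·)) *ᵥ y
      = (starRingEnd ℂ) (star y ⬝ᵥ (B.map (Complex.ofReal ·))ᵀ *ᵥ x) := by
  simp only [dotProduct, mulVec, Pi.star_apply, Matrix.map_apply, Matrix.transpose_apply,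
    Finset.mul_sum, map_sum]
  conv_rhs => rw [Finset.sum_comm]
  refine Finset.sum_congr rfl fun i _ => Finset.sum_congr rfl fun j _ => ?_
  simp only [Complex.star_def, _root_.map_mul, Complex.conj_conj, Complex.conj_ofReal]
  ring

private lemma mulVec_inj_aux (n m : ℕ) (B : Matrix (Fin n) (Fin m) ℝ)
    (hBrank : B.rank = m) (w : Fin m → ℝ) (hw : B *ᵥ w = 0) : w = 0 := by
  have hrn := LinearMap.finrank_range_add_finrank_ker B.mulVecLin
  rw [Module.finrank_pi ℝ, Fintype.card_fin] at hrn
  have hr : Module.finrank ℝ (LinearMap.range B.mulVecLin) = m := hBrank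
  have hker : Module.finrank ℝ (LinearMap.ker B.mulVecLin) = 0 := by omega
  have : LinearMap.ker B.mulVecLin = ⊥ := Submodule.finrank_eq_zero.mp hker
  have hwmem : w ∈ LinearMap.ker B.mulVecLin := by
    simpa [LinearMap.mem_ker, Matrix.mulVecLin_apply] using hw
  rw [this] at hwmem
  simpa using hwmem

private lemma quad_nonpos_aux (n : ℕ) (A : Matrix (Fin n) (Fin n) ℝ)
    (hAneg : ∀ x : Fin n → ℝ, x ≠ 0 → x ⬝ᵥ A.mulVec x < 0) (w : Fin n → ℝ) :
    w ⬝ᵥ A *ᵥ w ≤ 0 := by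
  by_cases hw : w = 0
  · simp [hw]
  · exact (hAneg w hw).le

/-- Linear-algebraic core of Theorem 4 of the paper: a block matrix
`[[A, B], [-Bᵀ, 0]]` with `A` symmetric negative definite and `B` of full column
rank is Hurwitz, i.e. all of its (complex) eigenvalues have strictly negative
real part. -/
theorem stmt_10 (n m : ℕ) (hn : 1 ≤ n) (hm1 : 1 ≤ m) (hmn : m ≤ n)
    (A : Matrix (Fin n) (Fin n) ℝ) (hAsymm : A.IsSymm)
    (hAneg : ∀ x : Fin n → ℝ, x ≠ 0 → x ⬝ᵥ A.mulVec x < 0)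
    (B : Matrix (Fin n) (Fin m) ℝ) (hBrank : B.rank = m)
    (J : Matrix (Fin n ⊕ Fin m) (Fin n ⊕ Fin m) ℝ)
    (hJ : J = Matrix.fromBlocks A B (-Bᵀ) 0) :
    ∀ lam : ℂ, (Matrix.charpoly (J.map (Complex.ofReal ·))).IsRoot lam → lam.re < 0 := by
  intro lam hroot
  set Jc := J.map (Complex.ofReal ·) with hJc
  -- from the root of the characteristic polynomial, extract an eigenvector
  have hdet : (Matrix.diagonal (fun _ => lam) - Jc).det = 0 := by
    have h1 : (Polynomial.evalRingHom lam) (Jc.charpoly) = 0 := hroot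
    rw [Matrix.charpoly, RingHom.map_det] at h1
    convert h1 using 2
    ext i j
    by_cases hij : i = j
    · subst hij
      simp [Matrix.charmatrix_apply_eq, Matrix.diagonal_apply_eq, Matrix.sub_apply]
    · simp [Matrix.charmatrix_apply_ne _ _ _ hij, Matrix.diagonal_apply_ne _ hij,
        Matrix.sub_apply]
  obtain ⟨v, hv0, hveq⟩ := Matrix.exists_mulVec_eq_zero_iff.mpr hdet
  have heig : Jc *ᵥ v = lam • v := by
    have := hveq
    rw [Matrix.sub_mulVec] at this
    have hd : Matrix.diagonal (fun _ => lam) *ᵥ v = lam • v := by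
      funext i
      simp [Matrix.mulVec_diagonal]
    rw [hd] at this
    exact (sub_eq_zero.mp this).symm
  -- split into blocks
  set x : Fin n → ℂ := v ∘ Sum.inl with hx
  set y : Fin m → ℂ := v ∘ Sum.inr with hy
  set Ac := A.map (Complex.ofReal ·) with hAc
  set Bc := B.map (Complex.ofReal ·) with hBc
  have hJcblocks : Jc = Matrix.fromBlocks Ac Bc (-Bcᵀ) 0 := by
    rw [hJc, hJ]
    ext (i | i) (j | j) <;>
      simp [Matrix.map_apply, Ac, Bc]
  have heig' : Sum.elim (Ac *ᵥ x + Bc *ᵥ y) ((-Bcᵀ) *ᵥ x + (0 : Matrix (Fin m) (Fin m) ℂ) *ᵥ y)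
      = lam • v := by
    rw [← Matrix.fromBlocks_mulVec, ← hJcblocks, heig]
  have eq1 : Ac *ᵥ x + Bc *ᵥ y = lam • x := by
    funext i
    have := congrFun heig' (Sum.inl i)
    simpa [hx] using this
  have eq2 : (-Bcᵀ) *ᵥ x = lam • y := by
    funext j
    have := congrFun heig' (Sum.inr j)
    simpa [hy] using this
  -- dot products
  have h1 : star x ⬝ᵥ (Ac *ᵥ x) + star x ⬝ᵥ (Bc *ᵥ y) = lam * (star x ⬝ᵥ x) := by
    have := congrArg (fun w => star x ⬝ᵥ w) eq1
    simpa [dotProduct_add, dotProduct_smul, smul_eq_mul] using this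
  have h2 : -(star y ⬝ᵥ (Bcᵀ *ᵥ x)) = lam * (star y ⬝ᵥ y) := by
    have := congrArg (fun w => star y ⬝ᵥ w) eq2
    simpa [Matrix.neg_mulVec, dotProduct_neg, dotProduct_smul, smul_eq_mul]
      using this
  -- real part bookkeeping
  have hsum : lam * (star x ⬝ᵥ x) + lam * (star y ⬝ᵥ y)
      = star x ⬝ᵥ (Ac *ᵥ x) + (star x ⬝ᵥ (Bc *ᵥ y) - star y ⬝ᵥ (Bcᵀ *ᵥ x)) := by
    rw [← h1, ← h2]; ring
  have hswap : star x ⬝ᵥ (Bc *ᵥ y) = (starRingEnd ℂ) (star y ⬝ᵥ (Bcᵀ *ᵥ x)) :=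
    dot_swap_aux n m B x y
  have hre : lam.re * ((star x ⬝ᵥ x).re + (star y ⬝ᵥ y).re)
      = (star x ⬝ᵥ (Ac *ᵥ x)).re := by
    have h := congrArg Complex.re hsum
    have hximzero : (star x ⬝ᵥ x).im = 0 := by
      simp only [dotProduct, Pi.star_apply, Complex.star_def, Complex.im_sum]
      refine Finset.sum_eq_zero fun i _ => ?_
      simp [Complex.mul_im, Complex.conj_re, Complex.conj_im]; ring
    have hyimzero : (star y ⬝ᵥ y).im = 0 := by
      simp only [dotProduct, Pi.star_apply, Complex.star_def, Complex.im_sum]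
      refine Finset.sum_eq_zero fun i _ => ?_
      simp [Complex.mul_im, Complex.conj_re, Complex.conj_im]; ring
    rw [Complex.add_re, Complex.mul_re, Complex.mul_re, hximzero, hyimzero] at h
    rw [Complex.add_re, Complex.sub_re, hswap, Complex.conj_re, sub_self, add_zero] at h
    linarith [h]
  -- x is nonzero
  have hxne : x ≠ 0 := by
    intro hx0
    have hBy : Bc *ᵥ y = 0 := by
      have := eq1
      rw [hx0] at this
      simpa using this
    have hyre : B *ᵥ (fun j => (y j).re) = 0 := by
      funext i
      have := congrArg (fun w => (w i).re) hBy
      simpa [Matrix.mulVec, dotProduct, hBc, Matrix.map_apply, Complex.re_sum,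
        Complex.re_ofReal_mul] using this
    have hyim : B *ᵥ (fun j => (y j).im) = 0 := by
      funext i
      have := congrArg (fun w => (w i).im) hBy
      simpa [Matrix.mulVec, dotProduct, hBc, Matrix.map_apply, Complex.im_sum,
        Complex.im_ofReal_mul] using this
    have h1 := mulVec_inj_aux n m B hBrank _ hyre
    have h2 := mulVec_inj_aux n m B hBrank _ hyim
    apply hv0
    funext i
    cases i with
    | inl i => exact congrFun hx0 i
    | inr j =>
      have hre := congrFun h1 j
      have him := congrFun h2 j
      exact Complex.ext (by exact hre) (by exact him)
  -- the quadratic form is negative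
  have hquad : (star x ⬝ᵥ (Ac *ᵥ x)).re < 0 := by
    rw [re_quad_aux n A x]
    have hne : (fun i => (x i).re) ≠ 0 ∨ (fun i => (x i).im) ≠ 0 := by
      by_contra hcon
      push_neg at hcon
      apply hxne
      funext i
      exact Complex.ext (congrFun hcon.1 i) (congrFun hcon.2 i)
    rcases hne with h | h
    · have := hAneg _ h
      have h2 := quad_nonpos_aux n A hAneg (fun i => (x i).im)
      linarith
    · have := hAneg _ h
      have h2 := quad_nonpos_aux n A hAneg (fun i => (x i).re)
      linarith
  -- positivity of the norm
  have hxpos : 0 < (star x ⬝ᵥ x).re := by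
    simp only [dotProduct, Pi.star_apply, Complex.star_def, Complex.re_sum]
    have : ∀ i, ((starRingEnd ℂ) (x i) * x i).re = Complex.normSq (x i) := by
      intro i
      rw [mul_comm, Complex.mul_conj]
      simp
    rw [Finset.sum_congr rfl fun i _ => this i]
    obtain ⟨i, hi⟩ : ∃ i, x i ≠ 0 := by
      by_contra hcon
      push_neg at hcon
      exact hxne (funext hcon)
    exact Finset.sum_pos' (fun j _ => Complex.normSq_nonneg _)
      ⟨i, Finset.mem_univ i, Complex.normSq_pos.mpr hi⟩
  have hynn : 0 ≤ (star y ⬝ᵥ y).re := by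
    simp only [dotProduct, Pi.star_apply, Complex.star_def, Complex.re_sum]
    refine Finset.sum_nonneg fun j _ => ?_
    rw [mul_comm, Complex.mul_conj]
    simpa using Complex.normSq_nonneg (y j)
  nlinarith [hre, hquad, hxpos, hynn]
end
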